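/- The matrix P₁ obtained from procedure 2 of Algorithm 2 is a 1-cyclic 2K/(K-kL+k)-regular (K/k, K/k, L, (K-kL)(K-kL+k)/(2k²)) placement delivery array. -/

import Mathlib

/-- A generalized placement delivery array predicate: an `F × Kc` array
(entries `none` = star, `some s` = integer) whose integer alphabet is `[lo, hi)`,
satisfying: C1 (exactly `Z` stars per column), all integers lie in `[lo, hi)`,
C2 (every integer in `[lo, hi)` appears), and C3. -/
def isPDAgen (Kc F Z lo hi : ℕ) (P : ℕ → ℕ → Option ℕ) : Prop :=
  (∀ j < Kc, ((Finset.range F).filter (fun i => P i j = none)).card = Z) ∧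
  (∀ i < F, ∀ j < Kc, ∀ s : ℕ, P i j = some s → lo ≤ s ∧ s < hi) ∧
  (∀ s : ℕ, lo ≤ s → s < hi → ∃ i < F, ∃ j < Kc, P i j = some s) ∧
  (∀ i₁ j₁ i₂ j₂ s, i₁ < F → j₁ < Kc → i₂ < F → j₂ < Kc →
    P i₁ j₁ = some s → P i₂ j₂ = some s → (i₁, j₁) ≠ (i₂, j₂) →
    i₁ ≠ i₂ ∧ j₁ ≠ j₂ ∧ P i₁ j₂ = none ∧ P i₂ j₁ = none)

/-- A `(Kc, F, Z, S)` PDA with integer alphabet `[0, S)`. -/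
def isPDA (Kc F Z S : ℕ) (P : ℕ → ℕ → Option ℕ) : Prop :=
  isPDAgen Kc F Z 0 S P

/-- `g`-regularity on alphabet `[lo, hi)`: each integer appears exactly `g` times. -/
def isRegularGen (g Kc F lo hi : ℕ) (P : ℕ → ℕ → Option ℕ) : Prop :=
  ∀ s : ℕ, lo ≤ s → s < hi →
    (((Finset.range F) ×ˢ (Finset.range Kc)).filter
      (fun p => P p.1 p.2 = some s)).card = g

/-- `t`-cyclic: in each column the `Z` stars occupy (cyclically) consecutive rows,
and each column's starting star position is the previous column's shifted down by `t`. -/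
def isCyclic (t Kc F Z : ℕ) (P : ℕ → ℕ → Option ℕ) : Prop :=
  ∃ start : ℕ → ℕ,
    (∀ j < Kc, ∀ i < F, (P i j = none ↔ ∃ r < Z, i = (start j + r) % F)) ∧
    (∀ j : ℕ, j + 1 < Kc → start (j + 1) % F = (start j + t) % F)

/-- The integer values of the matrix `A` of procedure 1:
`aVal n 0 j = j - 1` and `aVal n (i+1) j = aVal n i j + (n - (i+1))`. -/
def aVal (n : ℕ) : ℕ → ℕ → ℕ
  | 0, j => j - 1
  | i + 1, j => aVal n i j + (n - (i + 1))

/-- The `(n+1) × (n+1)` matrix `A` of procedure 1: stars on and below the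
diagonal, integers `aVal n i j` above it. -/
def Amat (n i j : ℕ) : Option ℕ :=
  if j ≤ i then none else some (aVal n i j)

/-- The block matrix `P₁` of procedure 2, with `b` row/column blocks of size
`n+1`: block `A` when the column block equals the row block, `Aᵀ` when the
column block is the row block plus one (mod `b`), and all-star otherwise. -/
def P1mat (n b i j : ℕ) : Option ℕ :=
  if j / (n + 1) = i / (n + 1) then Amat n (i % (n + 1)) (j % (n + 1))
  else if j / (n + 1) = (i / (n + 1) + 1) % b then Amat n (j % (n + 1)) (i % (n + 1))
  else none

/-- The `K × (K/k)` matrix `P̃₁` of procedure 3: each row of `P₁` is expanded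
into `k` rows, with integer entries incremented by `S₁ = (K-kL)(K-kL+k)/(2k²)`
from one row to the next. -/
def Ptilde1 (K k L i j : ℕ) : Option ℕ :=
  (P1mat ((K - k * L) / k) (K / (K - k * L + k)) (i / k) j).map
    (fun s => s + (i % k) * ((K - k * L) * (K - k * L + k) / (2 * k ^ 2)))

/-- The `K × K` matrix `P` of procedure 4: concatenation of
`P̃₁, P̃₁ + S̃₁, …, P̃₁ + (k-1)S̃₁` where `S̃₁ = (K-kL)(K-kL+k)/(2k)`. -/
def Pfull (K k L i j : ℕ) : Option ℕ :=
  (Ptilde1 K k L i (j % (K / k))).map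
    (fun s => s + (j / (K / k)) * ((K - k * L) * (K - k * L + k) / (2 * k)))

/-! Write rows and columns of `P₁` as `p * (n + 1) + x` with block `p < b` and offset `x ≤ n`.
Row `i` of `A` holds consecutive integers, so `(x, y) ↦ A x y` (`x < y ≤ n`) is a bijection onto
`[0, n(n+1)/2)`, and the entry `A x y` occurs in `P₁` exactly at the cells
`(p(n+1)+x, p(n+1)+y)` and `(p(n+1)+y, (p+1 mod b)(n+1)+x)`, `p < b`. This gives C2, the
`2b`-regularity, and C3 by inspecting corners. These cells show that the integers of column `j`
are in the `n` rows cyclically just above `j`, so its stars are the `b(n+1) - n` consecutive rows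
starting at `j`: this is C1 and `1`-cyclicity. With `K - kL = kn` and `K = k(n+1)b` the parameters
of the theorem are exactly these. -/

section RowValues

variable {n i j : ℕ}

/-- Row `i` of `A` holds the consecutive integers `rowStart n i, …, rowStart n (i + 1) - 1`. -/
def rowStart (n i : ℕ) : ℕ := aVal n i (i + 1)

lemma aVal_add (n i d : ℕ) (hj : 1 ≤ j) : aVal n i (j + d) = aVal n i j + d := by
  induction i with
  | zero => simp only [aVal]; omega
  | succ i ih => simp only [aVal, ih]; omega

lemma aVal_eq_rowStart (hij : i < j) : aVal n i j = rowStart n i + (j - (i + 1)) := by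
  rw [rowStart, ← aVal_add n i _ (Nat.succ_pos i), Nat.add_sub_cancel' hij]

lemma rowStart_zero : rowStart n 0 = 0 := rfl

lemma rowStart_succ (n i : ℕ) : rowStart n (i + 1) = rowStart n i + (n - (i + 1)) + 1 := by
  rw [rowStart, aVal, aVal_add n i 1 (by omega), rowStart]
  omega

lemma rowStart_strictMono : StrictMono (rowStart n) :=
  strictMono_nat_of_lt_succ fun i => by rw [rowStart_succ]; omega

lemma two_mul_rowStart (hi : i ≤ n) : 2 * rowStart n i + i * i = (2 * n + 1) * i := by
  induction i with
  | zero => rfl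
  | succ i ih =>
    have := ih (by omega)
    rw [rowStart_succ]
    ring_nf at this ⊢
    omega

lemma rowStart_self (n : ℕ) : rowStart n n = n * (n + 1) / 2 := by
  have h := two_mul_rowStart (le_refl n)
  rw [show (2 * n + 1) * n = n * (n + 1) + n * n by ring] at h
  omega

lemma aVal_mem_row (hij : i < j) (hj : j ≤ n) :
    rowStart n i ≤ aVal n i j ∧ aVal n i j < rowStart n (i + 1) := by
  rw [aVal_eq_rowStart hij, rowStart_succ]
  omega

lemma aVal_lt (hij : i < j) (hj : j ≤ n) : aVal n i j < n * (n + 1) / 2 :=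
  calc aVal n i j < rowStart n (i + 1) := (aVal_mem_row hij hj).2
    _ ≤ rowStart n n := rowStart_strictMono.monotone (by omega)
    _ = n * (n + 1) / 2 := rowStart_self n

lemma eq_of_aVal_eq {i' j' : ℕ} (hij : i < j) (hj : j ≤ n) (hij' : i' < j') (hj' : j' ≤ n)
    (h : aVal n i j = aVal n i' j') : i = i' ∧ j = j' := by
  have row_le : ∀ {i j i' j' : ℕ}, i < j → j ≤ n → i' < j' → j' ≤ n →
      aVal n i j = aVal n i' j' → i ≤ i' := by
    intro i j i' j' hij hj hij' hj' h
    by_contra hlt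
    have := (rowStart_strictMono (n := n)).monotone (show i' + 1 ≤ i by omega)
    have := aVal_mem_row (n := n) hij hj
    have := aVal_mem_row (n := n) hij' hj'
    omega
  obtain rfl := le_antisymm (row_le hij hj hij' hj' h) (row_le hij' hj' hij hj h.symm)
  rw [aVal_eq_rowStart hij, aVal_eq_rowStart hij'] at h
  omega

lemma exists_aVal_eq {s : ℕ} (hs : s < n * (n + 1) / 2) :
    ∃ i j, i < j ∧ j ≤ n ∧ aVal n i j = s := by
  suffices ∀ m ≤ n, s < rowStart n m → ∃ i j, i < j ∧ j ≤ n ∧ aVal n i j = s from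
    this n le_rfl (rowStart_self n ▸ hs)
  intro m
  induction m with
  | zero => simp [rowStart_zero]
  | succ m ih =>
    intro hm hs
    by_cases hsm : s < rowStart n m
    · exact ih (by omega) hsm
    · rw [rowStart_succ] at hs
      refine ⟨m, s - rowStart n m + m + 1, by omega, by omega, ?_⟩
      rw [aVal_eq_rowStart (by omega)]
      omega

end RowValues

section Blocks

variable {b c p x : ℕ}

lemma block_div (p : ℕ) (hx : x < c) : (p * c + x) / c = p := by
  rw [add_comm, Nat.add_mul_div_right _ _ (by omega), Nat.div_eq_of_lt hx, zero_add]

lemma block_mod (p : ℕ) (hx : x < c) : (p * c + x) % c = x := by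
  rw [add_comm, Nat.add_mul_mod_self_right, Nat.mod_eq_of_lt hx]

lemma block_lt (hp : p < b) (hx : x < c) : p * c + x < b * c :=
  calc p * c + x < (p + 1) * c := by rw [add_mul, one_mul]; omega
    _ ≤ b * c := Nat.mul_le_mul_right c hp

lemma block_inj {p' x' : ℕ} (hx : x < c) (hx' : x' < c) :
    p * c + x = p' * c + x' ↔ p = p' ∧ x = x' :=
  ⟨fun h => ⟨by rw [← block_div p hx, h, block_div p' hx'],
    by rw [← block_mod p hx, h, block_mod p' hx']⟩, by rintro ⟨rfl, rfl⟩; rfl⟩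

lemma exists_block_eq {i : ℕ} (hi : i < b * c) : ∃ p < b, ∃ x < c, i = p * c + x :=
  ⟨i / c, Nat.div_lt_of_lt_mul (by rwa [mul_comm]), i % c,
    Nat.mod_lt _ (Nat.pos_of_mul_pos_left (by omega : 0 < b * c)), (Nat.div_add_mod' i c).symm⟩

lemma block_mod_mul (q : ℕ) (hx : x < c) : (q * c + x) % (b * c) = q % b * c + x := by
  rcases Nat.eq_zero_or_pos b with rfl | hb
  · simp
  conv_lhs => rw [← Nat.mod_add_div q b]
  rw [show (q % b + b * (q / b)) * c + x = q % b * c + x + q / b * (b * c) by ring,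
    Nat.add_mul_mod_self_right, Nat.mod_eq_of_lt (block_lt (Nat.mod_lt q hb) hx)]

lemma succ_mod_eq_ite (hp : p < b) : (p + 1) % b = if p + 1 = b then 0 else p + 1 := by
  split_ifs with h
  · rw [h, Nat.mod_self]
  · exact Nat.mod_eq_of_lt (by omega)

lemma succ_mod_inj {p' : ℕ} (hp : p < b) (hp' : p' < b) (h : (p + 1) % b = (p' + 1) % b) :
    p = p' := by
  rw [succ_mod_eq_ite hp, succ_mod_eq_ite hp'] at h
  split_ifs at h <;> omega

lemma succ_mod_ne (hb : 2 ≤ b) (hp : p < b) : (p + 1) % b ≠ p := by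
  rw [succ_mod_eq_ite hp]
  split_ifs <;> omega

end Blocks

section CyclicWindow

variable {F i j : ℕ}

lemma add_mod_injOn (F j : ℕ) : Set.InjOn (fun r => (j + r) % F) (Set.Iio F) :=
  fun _ hr _ hr' h => Nat.ModEq.eq_of_lt_of_lt (Nat.ModEq.add_left_cancel' j h) hr hr'

lemma eq_add_mod_iff (hi : i < F) (hj : j < F) {t : ℕ} (ht : t ≤ F) :
    j = (i + t) % F ↔ i = (j + (F - t)) % F := by
  constructor <;> rintro rfl
  · rw [Nat.mod_add_mod, add_assoc, Nat.add_sub_cancel' ht, Nat.add_mod_right,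
      Nat.mod_eq_of_lt hi]
  · rw [Nat.mod_add_mod, add_assoc, Nat.sub_add_cancel ht, Nat.add_mod_right,
      Nat.mod_eq_of_lt hj]

/-- Cyclically, `i - j ∈ [0, F - n)` exactly when `j - i ∉ [1, n]`. -/
lemma exists_window_iff {n : ℕ} (hi : i < F) (hj : j < F) :
    (∃ r < F - n, i = (j + r) % F) ↔ ¬ ∃ t, 0 < t ∧ t ≤ n ∧ j = (i + t) % F := by
  set d := (i + F - j) % F
  have hd : d < F := Nat.mod_lt _ (by omega)
  have hid : i = (j + d) % F := by
    rw [Nat.add_mod_mod, show j + (i + F - j) = i + F by omega, Nat.add_mod_right,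
      Nat.mod_eq_of_lt hi]
  have eq_d : ∀ r < F, i = (j + r) % F → r = d :=
    fun r hr h => add_mod_injOn F j hr hd (h.symm.trans hid)
  constructor
  · rintro ⟨r, hr, hir⟩ ⟨t, ht0, htn, hjt⟩
    have := eq_d r (by omega) hir
    have := eq_d (F - t) (by omega) ((eq_add_mod_iff hi hj (by omega)).1 hjt)
    omega
  · intro h
    refine ⟨d, ?_, hid⟩
    by_contra hdn
    refine h ⟨F - d, by omega, by omega, (eq_add_mod_iff hi hj (by omega)).2 ?_⟩
    rwa [Nat.sub_sub_self hd.le]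

end CyclicWindow

lemma Amat_eq_some_iff {n x y s : ℕ} : Amat n x y = some s ↔ x < y ∧ aVal n x y = s := by
  unfold Amat
  split_ifs <;> simp <;> omega

section P1

variable {n b i j s : ℕ}

/-- Block row `p` of `P₁` contains the entry `A x y` twice: in the diagonal block at `diagCell`,
and transposed, in the block `(p, p + 1 mod b)`, at `shiftCell`. -/
def diagCell (n x y p : ℕ) : ℕ × ℕ := (p * (n + 1) + x, p * (n + 1) + y)

def shiftCell (n b x y p : ℕ) : ℕ × ℕ := (p * (n + 1) + y, (p + 1) % b * (n + 1) + x)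

lemma P1mat_block {p q x y : ℕ} (hx : x ≤ n) (hy : y ≤ n) :
    P1mat n b (p * (n + 1) + x) (q * (n + 1) + y) =
      if q = p then Amat n x y else if q = (p + 1) % b then Amat n y x else none := by
  simp only [P1mat, block_div _ (Nat.lt_succ_of_le hx), block_div _ (Nat.lt_succ_of_le hy),
    block_mod _ (Nat.lt_succ_of_le hx), block_mod _ (Nat.lt_succ_of_le hy)]

lemma P1mat_eq_some_iff (hb : 2 ≤ b) (hi : i < b * (n + 1)) (hj : j < b * (n + 1)) :
    P1mat n b i j = some s ↔ ∃ x y, x < y ∧ y ≤ n ∧ aVal n x y = s ∧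
      ∃ p < b, (i, j) = diagCell n x y p ∨ (i, j) = shiftCell n b x y p := by
  obtain ⟨p, hp, x, hx, rfl⟩ := exists_block_eq hi
  obtain ⟨q, -, y, hy, rfl⟩ := exists_block_eq hj
  rw [P1mat_block (by omega) (by omega)]
  constructor
  · intro h
    split_ifs at h with hqp hq
    · obtain ⟨hxy, rfl⟩ := Amat_eq_some_iff.1 h
      exact ⟨x, y, hxy, by omega, rfl, p, hp, Or.inl (by rw [hqp, diagCell])⟩
    · obtain ⟨hyx, rfl⟩ := Amat_eq_some_iff.1 h
      exact ⟨y, x, hyx, by omega, rfl, p, hp, Or.inr (by rw [hq, shiftCell])⟩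
  · rintro ⟨x', y', hxy, hy', rfl, p', hp', h | h⟩ <;>
      simp only [diagCell, shiftCell, Prod.mk.injEq] at h <;>
      obtain ⟨h₁, h₂⟩ := h
    · obtain ⟨rfl, rfl⟩ := (block_inj hx (by omega)).1 h₁
      obtain ⟨rfl, rfl⟩ := (block_inj hy (by omega)).1 h₂
      rw [if_pos rfl]
      exact Amat_eq_some_iff.2 ⟨hxy, rfl⟩
    · obtain ⟨rfl, rfl⟩ := (block_inj hx (by omega)).1 h₁
      obtain ⟨rfl, rfl⟩ := (block_inj hy (by omega)).1 h₂
      rw [if_neg (succ_mod_ne hb hp), if_pos rfl]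
      exact Amat_eq_some_iff.2 ⟨hxy, rfl⟩

lemma P1mat_ne_none_iff (hb : 2 ≤ b) (hi : i < b * (n + 1)) (hj : j < b * (n + 1)) :
    P1mat n b i j ≠ none ↔ ∃ t, 0 < t ∧ t ≤ n ∧ j = (i + t) % (b * (n + 1)) := by
  constructor
  · rw [Option.ne_none_iff_exists']
    rintro ⟨s, h⟩
    obtain ⟨x, y, hxy, hy, -, p, hp, h | h⟩ := (P1mat_eq_some_iff hb hi hj).1 h <;>
      simp only [diagCell, shiftCell, Prod.mk.injEq] at h <;>
      obtain ⟨rfl, rfl⟩ := h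
    · refine ⟨y - x, by omega, by omega, ?_⟩
      rw [show p * (n + 1) + x + (y - x) = p * (n + 1) + y by omega, Nat.mod_eq_of_lt hj]
    · refine ⟨n + 1 + x - y, by omega, by omega, ?_⟩
      rw [show p * (n + 1) + y + (n + 1 + x - y) = (p + 1) * (n + 1) + x by rw [add_mul]; omega,
        block_mod_mul _ (by omega)]
  · rintro ⟨t, ht0, htn, rfl⟩
    obtain ⟨p, hp, x, hx, rfl⟩ := exists_block_eq hi
    by_cases hxt : x + t ≤ n
    · rw [add_assoc, Nat.mod_eq_of_lt (block_lt hp (by omega)), P1mat_block (by omega) hxt,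
        if_pos rfl, Amat, if_neg (by omega)]
      simp
    · rw [show p * (n + 1) + x + t = (p + 1) * (n + 1) + (x + t - (n + 1)) by rw [add_mul]; omega,
        block_mod_mul _ (by omega), P1mat_block (by omega) (by omega),
        if_neg (succ_mod_ne hb hp), if_pos rfl, Amat, if_neg (by omega)]
      simp

lemma P1mat_eq_none_iff (hb : 2 ≤ b) (hi : i < b * (n + 1)) (hj : j < b * (n + 1)) :
    P1mat n b i j = none ↔ ∃ r < b * (n + 1) - n, i = (j + r) % (b * (n + 1)) := by
  rw [exists_window_iff hi hj, ← P1mat_ne_none_iff hb hi hj, not_not]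

lemma card_filter_P1mat_eq_none (hb : 2 ≤ b) (hj : j < b * (n + 1)) :
    ((Finset.range (b * (n + 1))).filter (fun i => P1mat n b i j = none)).card
      = b * (n + 1) - n := by
  have hstars : (Finset.range (b * (n + 1))).filter (fun i => P1mat n b i j = none)
      = (Finset.range (b * (n + 1) - n)).image (fun r => (j + r) % (b * (n + 1))) := by
    ext i
    simp only [Finset.mem_filter, Finset.mem_image, Finset.mem_range]
    constructor
    · rintro ⟨hi, h⟩
      obtain ⟨r, hr, rfl⟩ := (P1mat_eq_none_iff hb hi hj).1 h
      exact ⟨r, hr, rfl⟩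
    · rintro ⟨r, hr, rfl⟩
      have hi := Nat.mod_lt (j + r) (by omega : 0 < b * (n + 1))
      exact ⟨hi, (P1mat_eq_none_iff hb hi hj).2 ⟨r, hr, rfl⟩⟩
  rw [hstars, Finset.card_image_of_injOn, Finset.card_range]
  exact (add_mod_injOn _ j).mono (by simp)

lemma P1mat_corners_of_eq_some {i₁ j₁ i₂ j₂ : ℕ} (hb : 2 ≤ b)
    (hi₁ : i₁ < b * (n + 1)) (hj₁ : j₁ < b * (n + 1))
    (hi₂ : i₂ < b * (n + 1)) (hj₂ : j₂ < b * (n + 1))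
    (h₁ : P1mat n b i₁ j₁ = some s) (h₂ : P1mat n b i₂ j₂ = some s)
    (hne : (i₁, j₁) ≠ (i₂, j₂)) :
    i₁ ≠ i₂ ∧ j₁ ≠ j₂ ∧ P1mat n b i₁ j₂ = none ∧ P1mat n b i₂ j₁ = none := by
  obtain ⟨x, y, hxy, hy, hval, p, hp, c₁⟩ := (P1mat_eq_some_iff hb hi₁ hj₁).1 h₁
  obtain ⟨x', y', hxy', hy', hval', p', hp', c₂⟩ := (P1mat_eq_some_iff hb hi₂ hj₂).1 h₂
  obtain ⟨rfl, rfl⟩ := eq_of_aVal_eq hxy hy hxy' hy' (hval.trans hval'.symm)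
  clear h₁ h₂ hval hval'
  have hx : x ≤ n := by omega
  have hxc : x < n + 1 := by omega
  have hyc : y < n + 1 := by omega
  have hsucc : (p + 1) % b = (p' + 1) % b ↔ p = p' :=
    ⟨succ_mod_inj hp hp', fun h => h ▸ rfl⟩
  have := succ_mod_ne hb hp
  have := succ_mod_ne hb hp'
  -- Each corner has equal offsets in its blocks (a diagonal entry of `A` or `Aᵀ`), or lies
  -- outside the two non-star blocks of its block row.
  rcases c₁ with c₁ | c₁ <;> rcases c₂ with c₂ | c₂ <;>
    simp only [diagCell, shiftCell, Prod.mk.injEq] at c₁ c₂ <;>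
    obtain ⟨rfl, rfl⟩ := c₁ <;> obtain ⟨rfl, rfl⟩ := c₂ <;>
    simp only [ne_eq, Prod.mk.injEq, and_true, block_inj hxc hxc, block_inj hxc hyc,
      block_inj hyc hxc, block_inj hyc hyc, P1mat_block hx hx, P1mat_block hx hy, P1mat_block hy hx,
      P1mat_block hy hy] at hne ⊢ <;>
    simp only [Amat] <;> split_ifs <;> simp <;> omega

lemma filter_P1mat_eq_some_aVal (hb : 2 ≤ b) {x y : ℕ} (hxy : x < y) (hy : y ≤ n) :
    ((Finset.range (b * (n + 1))) ×ˢ (Finset.range (b * (n + 1)))).filter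
      (fun c => P1mat n b c.1 c.2 = some (aVal n x y))
      = (Finset.range b).image (diagCell n x y) ∪ (Finset.range b).image (shiftCell n b x y) := by
  ext ⟨i, j⟩
  simp only [Finset.mem_filter, Finset.mem_product, Finset.mem_range, Finset.mem_union,
    Finset.mem_image]
  constructor
  · rintro ⟨⟨hi, hj⟩, h⟩
    obtain ⟨x', y', hxy', hy', hval, p, hp, hc⟩ := (P1mat_eq_some_iff hb hi hj).1 h
    obtain ⟨rfl, rfl⟩ := eq_of_aVal_eq hxy' hy' hxy hy hval
    exact hc.imp (fun hc => ⟨p, hp, hc.symm⟩) (fun hc => ⟨p, hp, hc.symm⟩)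
  · rintro (⟨p, hp, hc⟩ | ⟨p, hp, hc⟩) <;>
      simp only [diagCell, shiftCell, Prod.mk.injEq] at hc <;> obtain ⟨rfl, rfl⟩ := hc
    · have hi := block_lt hp (by omega : x < n + 1)
      have hj := block_lt hp (by omega : y < n + 1)
      exact ⟨⟨hi, hj⟩, (P1mat_eq_some_iff hb hi hj).2 ⟨x, y, hxy, hy, rfl, p, hp, .inl rfl⟩⟩
    · have hi := block_lt hp (by omega : y < n + 1)
      have hj := block_lt (Nat.mod_lt (p + 1) (by omega : 0 < b)) (by omega : x < n + 1)
      exact ⟨⟨hi, hj⟩, (P1mat_eq_some_iff hb hi hj).2 ⟨x, y, hxy, hy, rfl, p, hp, .inr rfl⟩⟩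

lemma card_filter_P1mat_eq_some (hb : 2 ≤ b) (hs : s < n * (n + 1) / 2) :
    (((Finset.range (b * (n + 1))) ×ˢ (Finset.range (b * (n + 1)))).filter
      (fun c => P1mat n b c.1 c.2 = some s)).card = 2 * b := by
  obtain ⟨x, y, hxy, hy, rfl⟩ := exists_aVal_eq hs
  have hxc : x < n + 1 := by omega
  have hyc : y < n + 1 := by omega
  have hdisj : Disjoint ((Finset.range b).image (diagCell n x y))
      ((Finset.range b).image (shiftCell n b x y)) := by
    simp only [Finset.disjoint_left, Finset.mem_image, Finset.mem_range]
    rintro _ ⟨p, -, rfl⟩ ⟨p', -, h⟩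
    have := ((block_inj hyc hxc).1 (congrArg Prod.fst h)).2
    omega
  have hinj : ∀ {x}, x < n + 1 → Function.Injective (fun p => p * (n + 1) + x) :=
    fun hx _ _ h => ((block_inj hx hx).1 h).1
  rw [filter_P1mat_eq_some_aVal hb hxy hy, Finset.card_union_of_disjoint hdisj,
    Finset.card_image_of_injective _ fun _ _ h => hinj hxc (congrArg Prod.fst h),
    Finset.card_image_of_injective _ fun _ _ h => hinj hyc (congrArg Prod.fst h),
    Finset.card_range, two_mul]

theorem isPDA_P1mat (hb : 2 ≤ b) :
    isPDA (b * (n + 1)) (b * (n + 1)) (b * (n + 1) - n) (n * (n + 1) / 2) (P1mat n b) := by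
  refine ⟨fun j hj => card_filter_P1mat_eq_none hb hj, ?_, ?_, ?_⟩
  · intro i hi j hj s h
    obtain ⟨x, y, hxy, hy, rfl, -⟩ := (P1mat_eq_some_iff hb hi hj).1 h
    exact ⟨Nat.zero_le _, aVal_lt hxy hy⟩
  · intro s _ hs
    obtain ⟨x, y, hxy, hy, hval⟩ := exists_aVal_eq hs
    have hF : n + 1 ≤ b * (n + 1) := Nat.le_mul_of_pos_left _ (by omega)
    exact ⟨x, by omega, y, by omega, (P1mat_eq_some_iff hb (by omega) (by omega)).2
      ⟨x, y, hxy, hy, hval, 0, by omega, Or.inl (by simp [diagCell])⟩⟩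
  · exact fun _ _ _ _ _ => P1mat_corners_of_eq_some hb

theorem isRegularGen_P1mat (hb : 2 ≤ b) :
    isRegularGen (2 * b) (b * (n + 1)) (b * (n + 1)) 0 (n * (n + 1) / 2) (P1mat n b) :=
  fun _ _ hs => card_filter_P1mat_eq_some hb hs

theorem isCyclic_P1mat (hb : 2 ≤ b) :
    isCyclic 1 (b * (n + 1)) (b * (n + 1)) (b * (n + 1) - n) (P1mat n b) :=
  ⟨id, fun _ hj _ hi => P1mat_eq_none_iff hb hi hj, fun _ _ => rfl⟩

end P1

theorem stmt9_general (K k L : ℕ) (hk : 0 < k) (hKL : k * L < K)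
    (hdk : k ∣ K) (hdv : (K - k * L + k) ∣ K)
    (hb : 2 ≤ K / (K - k * L + k)) :
    isPDA (K / k) (K / k) L ((K - k * L) * (K - k * L + k) / (2 * k ^ 2))
      (P1mat ((K - k * L) / k) (K / (K - k * L + k))) ∧
    isRegularGen (2 * K / (K - k * L + k)) (K / k) (K / k) 0
      ((K - k * L) * (K - k * L + k) / (2 * k ^ 2))
      (P1mat ((K - k * L) / k) (K / (K - k * L + k))) ∧
    isCyclic 1 (K / k) (K / k) L
      (P1mat ((K - k * L) / k) (K / (K - k * L + k))) := by
  obtain ⟨n, hn⟩ : k ∣ K - k * L := Nat.dvd_sub hdk (dvd_mul_right k L)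
  have hblock : K - k * L + k = k * (n + 1) := by rw [hn, mul_add, mul_one]
  obtain ⟨b, hK⟩ : k * (n + 1) ∣ K := hblock ▸ hdv
  have hS : (K - k * L) * (K - k * L + k) / (2 * k ^ 2) = n * (n + 1) / 2 := by
    rw [hblock, hn, show k * n * (k * (n + 1)) = k ^ 2 * (n * (n + 1)) by ring, mul_comm 2,
      Nat.mul_div_mul_left _ _ (by positivity)]
  have hg : 2 * K / (K - k * L + k) = 2 * b := by
    rw [hblock, hK, mul_left_comm, Nat.mul_div_cancel_left _ (by positivity)]
  have hblocks : K / (k * (n + 1)) = b := by rw [hK, Nat.mul_div_cancel_left _ (by positivity)]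
  have hrows : K / k = b * (n + 1) := by rw [hK, mul_assoc, Nat.mul_div_cancel_left _ hk, mul_comm]
  have hL : L = b * (n + 1) - n := by
    have : k * (L + n) = k * (b * (n + 1)) := by
      rw [mul_add, ← hn, Nat.add_sub_cancel' hKL.le, hK]; ring
    have := Nat.eq_of_mul_eq_mul_left hk this
    omega
  rw [hblock, hblocks] at hb
  rw [hS, hg, hblock, hblocks, hrows, hn, Nat.mul_div_cancel_left _ hk, hL]
  exact ⟨isPDA_P1mat hb, isRegularGen_P1mat hb, isCyclic_P1mat hb⟩

/-- The matrix `P₁` obtained from procedure 2 of Algorithm 2 is a 1-cyclic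
`2K/(K-kL+k)`-regular `(K/k, K/k, L, (K-kL)(K-kL+k)/(2k²))` PDA. -/
theorem stmt9 (K k L : ℕ) (hk : 0 < k) (hL : 0 < L) (hKL : k * L < K)
    (hdk : k ∣ K) (hdv : (K - k * L + k) ∣ K)
    (hb : 2 ≤ K / (K - k * L + k)) :
    isPDA (K / k) (K / k) L ((K - k * L) * (K - k * L + k) / (2 * k ^ 2))
      (P1mat ((K - k * L) / k) (K / (K - k * L + k))) ∧
    isRegularGen (2 * K / (K - k * L + k)) (K / k) (K / k) 0
      ((K - k * L) * (K - k * L + k) / (2 * k ^ 2))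
      (P1mat ((K - k * L) / k) (K / (K - k * L + k))) ∧
    isCyclic 1 (K / k) (K / k) L
      (P1mat ((K - k * L) / k) (K / (K - k * L + k))) :=
  stmt9_general K k L hk hKL hdk hdv hb
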